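/- Let G be a finite connected unicyclic graph, i.e., a connected simple graph whose number of edges m equals its number of vertices n (equivalently, containing exactly one cycle). Then (Σ_{uv ∈ E(G)} ε₃(u;G)·ε₃(v;G)) / m ≤ (Σ_{u ∈ V(G)} ε₃(u;G)²) / n, that is, F₂(G)/m(G) ≤ F₁(G)/n(G). -/

import Mathlib

open SimpleGraph Finset

variable {V : Type*}

/-- The Fermat distance of a vertex triple: minimum over all vertices σ of
    `d(σ,u) + d(σ,v) + d(σ,w)`. -/
noncomputable def fermatDist (G : SimpleGraph V) (u v w : V) : ℕ :=
  ⨅ σ : V, (G.dist σ u + G.dist σ v + G.dist σ w)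

/-- The Fermat eccentricity `ε₃(u;G)`: maximum Fermat distance of triples containing `u`. -/
noncomputable def fermatEcc [Fintype V] (G : SimpleGraph V) (u : V) : ℕ :=
  Finset.univ.sup fun p : V × V => fermatDist G u p.1 p.2

/-- The ordinary eccentricity `ε₂(u;G)`. -/
noncomputable def ecc2 [Fintype V] (G : SimpleGraph V) (u : V) : ℕ :=
  Finset.univ.sup fun v => G.dist u v

/-- The diameter of `G`. -/
noncomputable def gdiam [Fintype V] (G : SimpleGraph V) : ℕ :=
  Finset.univ.sup fun p : V × V => G.dist p.1 p.2

/-- A central vertex: one minimizing the ordinary eccentricity. -/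
def isCentral [Fintype V] (G : SimpleGraph V) (c : V) : Prop :=
  ∀ u : V, ecc2 G c ≤ ecc2 G u

/-- The number of edges of `G`. -/
noncomputable def numEdges [Fintype V] (G : SimpleGraph V) : ℕ :=
  letI := Classical.decEq V
  letI := Classical.decRel G.Adj
  G.edgeFinset.card

/-- The first Zagreb–Fermat eccentricity index `F₁(G) = Σ_u ε₃(u)²`. -/
noncomputable def F1 [Fintype V] (G : SimpleGraph V) : ℕ :=
  ∑ u : V, (fermatEcc G u) ^ 2

/-- The second Zagreb–Fermat eccentricity index `F₂(G) = Σ_{uv ∈ E} ε₃(u)·ε₃(v)`. -/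
noncomputable def F2 [Fintype V] (G : SimpleGraph V) : ℕ :=
  letI := Classical.decEq V
  letI := Classical.decRel G.Adj
  ∑ e ∈ G.edgeFinset,
    Sym2.lift ⟨fun u v => fermatEcc G u * fermatEcc G v, fun _ _ => mul_comm _ _⟩ e

/-- `u` lies in the subtree `T_{v_i}` hanging off the `i`-th vertex of the path `P`:
its geodesic to every vertex of `P` passes through `P.getVert i`. -/
def inSubtree (G : SimpleGraph V) {a b : V} (P : G.Walk a b) (i : ℕ) (u : V) : Prop :=
  ∀ j ≤ P.length, G.dist u (P.getVert j) = G.dist u (P.getVert i) + G.dist (P.getVert i) (P.getVert j)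

/-- `ℓ_i`: the height of the subtree `T_{v_i}`. -/
noncomputable def subtreeHeight [Fintype V] (G : SimpleGraph V) {a b : V} (P : G.Walk a b)
    (i : ℕ) : ℕ :=
  letI := Classical.decPred (inSubtree G P i)
  Finset.univ.sup fun u => if inSubtree G P i u then G.dist (P.getVert i) u else 0

/-! Since `m = n` it suffices to show `F₂ ≤ F₁`. On each edge `2ab ≤ a² + b²`, so
`2 F₂ ≤ Σᵤ deg u · ε₃(u)²`; writing `ε₃(u)² = Σ_{t < ε₃(u)} (2t + 1)`, the bound
`Σᵤ deg u · ε₃(u)² ≤ 2 F₁` follows from `Σ_{ε₃(u) > t} deg u ≤ 2 · #{u | ε₃(u) > t}` for every `t`.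
As `Σᵤ deg u = 2m ≤ 2n`, this amounts to `2|K| ≤ Σ_{u ∈ K} deg u` for every component `K` of
the sublevel set `{ε₃ ≤ t}` (when `ε₃ > t` somewhere). A spanning tree of `K` gives
`2(|K| - 1)` darts inside `K`, so two darts leaving `K` suffice. If only one dart `x → y` left
`K`, every geodesic from `K` to the rest would pass through `y`; for a pair `p, q` realising
`ε₃(y)`, either one of them lies in `K`, or moving the Fermat point shows
`F(y, p, q) ≤ F(x, p, q)`. Either way `ε₃(y) ≤ t`, so `y ∈ K`, a contradiction. -/

namespace Finset

lemma sum_mul_le_sum_mul_of_sum_superlevel_le {ι : Type*} (s : Finset ι) (f w c : ι → ℕ)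
    {g : ℕ → ℕ} (hg : Monotone g) (hg0 : g 0 = 0)
    (h : ∀ t, ∑ u ∈ s with t < f u, w u ≤ ∑ u ∈ s with t < f u, c u) :
    ∑ u ∈ s, w u * g (f u) ≤ ∑ u ∈ s, c u * g (f u) := by
  set N := s.sup f
  have h_layer (a : ι → ℕ) : ∑ u ∈ s, a u * g (f u) =
      ∑ t ∈ range N, (g (t + 1) - g t) * ∑ u ∈ s with t < f u, a u := by
    have h_tele : ∀ u ∈ s, g (f u) = ∑ t ∈ range N with t < f u, (g (t + 1) - g t) := by
      intro u hu
      have h_range : {t ∈ range N | t < f u} = range (f u) := by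
        ext t
        have := le_sup (f := f) hu
        simp only [mem_filter, mem_range]
        omega
      rw [h_range, sum_range_tsub hg, hg0, Nat.sub_zero]
    rw [sum_congr rfl fun u hu => by rw [h_tele u hu]]
    simp only [mul_sum, sum_filter]
    rw [sum_comm]
    refine sum_congr rfl fun t _ => sum_congr rfl fun u _ => ?_
    split_ifs <;> ring
  rw [h_layer w, h_layer c]
  exact sum_le_sum fun t _ => Nat.mul_le_mul_left _ (h t)

end Finset

namespace SimpleGraph

variable {G : SimpleGraph V}

lemma Reachable.exists_adj_dist_lt {u v : V} (h : G.Reachable u v) (hne : v ≠ u) :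
    ∃ w, G.Adj v w ∧ G.dist u w < G.dist u v := by
  obtain ⟨p, hp⟩ := h.exists_walk_length_eq_dist
  have hnil : ¬ p.Nil := fun hn => hne hn.eq.symm
  refine ⟨p.penultimate, (p.adj_penultimate hnil).symm, ?_⟩
  have := p.length_dropLast_add_one hnil
  have := dist_le p.dropLast
  omega

lemma Connected.dist_le_dist_of_forall_boundary_dart_snd_eq {K : Set V} {y : V}
    (hG : G.Connected) (hK : ∀ d : G.Dart, d.fst ∈ K → d.snd ∉ K → d.snd = y) {a b : V}
    (ha : a ∈ K) (hb : b ∉ K) : G.dist y b ≤ G.dist a b := by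
  classical
  obtain ⟨p, hp⟩ := hG.exists_walk_length_eq_dist a b
  obtain ⟨d, hd, hdK, hdK'⟩ := p.exists_boundary_dart K ha hb
  have hy : y ∈ p.support := hK d hdK hdK' ▸ p.dart_snd_mem_support_of_mem_darts hd
  calc G.dist y b ≤ (p.dropUntil y hy).length := dist_le _
    _ ≤ G.dist a b := hp ▸ p.length_dropUntil_le_length hy

variable [Fintype V] [DecidableEq V] [DecidableRel G.Adj]

lemma sum_darts_fst (g : V → ℕ) : ∑ d : G.Dart, g d.fst = ∑ v, G.degree v * g v := by
  rw [← sum_fiberwise univ (·.fst)]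
  refine sum_congr rfl fun v _ => ?_
  rw [sum_congr rfl fun d hd => by rw [(mem_filter.mp hd).2], sum_const, smul_eq_mul,
    dart_fst_fiber_card_eq_degree]

lemma sum_degree_eq_card_darts (K : Finset V) :
    ∑ u ∈ K, G.degree u = #{d : G.Dart | d.fst ∈ K} := by
  rw [card_filter, sum_darts_fst (fun v => if v ∈ K then 1 else 0),
    ← sum_subset (subset_univ K)] <;> simp +contextual

lemma sum_edgeFinset_lift_add (g : V → ℕ) :
    ∑ e ∈ G.edgeFinset, Sym2.lift ⟨fun u v => g u + g v, fun _ _ => add_comm _ _⟩ e =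
      ∑ v, G.degree v * g v := by
  rw [← sum_darts_fst, ← sum_fiberwise_of_maps_to (g := fun d : G.Dart => d.edge)
    (t := G.edgeFinset) fun d _ => mem_edgeFinset.mpr d.edge_mem]
  refine sum_congr rfl fun e he => ?_
  induction e with
  | _ u v =>
    let d : G.Dart := ⟨(u, v), mem_edgeFinset.mp he⟩
    rw [show {d' ∈ (univ : Finset G.Dart) | d'.edge = s(u, v)} = {d, d.symm} from d.edge_fiber,
      sum_pair d.symm_ne.symm]
    simp [d]

lemma two_mul_sum_edgeFinset_lift_mul_le (x : V → ℕ) :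
    2 * ∑ e ∈ G.edgeFinset, Sym2.lift ⟨fun u v => x u * x v, fun _ _ => mul_comm _ _⟩ e ≤
      ∑ v, G.degree v * x v ^ 2 := by
  rw [← sum_edgeFinset_lift_add, mul_sum]
  refine sum_le_sum fun e _ => ?_
  induction e with
  | _ u v => simpa [mul_assoc] using two_mul_le_add_sq (x u) (x v)

lemma two_mul_card_le_card_darts_of_rank (K : Finset V) (r : V → ℕ) :
    2 * #{u ∈ K | ∃ v ∈ K, G.Adj u v ∧ r v < r u} ≤
      #{d : G.Dart | d.fst ∈ K ∧ d.snd ∈ K} := by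
  set down : Finset G.Dart := {d | d.fst ∈ K ∧ d.snd ∈ K ∧ r d.snd < r d.fst}
  set up : Finset G.Dart := {d | d.fst ∈ K ∧ d.snd ∈ K ∧ r d.fst < r d.snd}
  have h_down : #{u ∈ K | ∃ v ∈ K, G.Adj u v ∧ r v < r u} ≤ #down := by
    refine card_le_card_of_surjOn (·.fst) ?_
    rintro u hu
    obtain ⟨huK, v, hvK, huv, hlt⟩ := by simpa using hu
    exact ⟨⟨(u, v), huv⟩, by simp [down, huK, hvK, hlt], rfl⟩
  have h_up : #up = #down :=
    card_bij (fun d _ => d.symm) (by simp +contextual [up, down])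
      (fun _ _ _ _ h => Dart.symm_involutive.injective h)
      (fun d hd => ⟨d.symm, by simp_all [up, down], d.symm_symm⟩)
  have h_disj : Disjoint down up := by
    simp only [down, up, disjoint_filter]
    omega
  calc 2 * #{u ∈ K | ∃ v ∈ K, G.Adj u v ∧ r v < r u} ≤ #down + #up := by omega
    _ = #(down ∪ up) := (card_union_of_disjoint h_disj).symm
    _ ≤ #{d : G.Dart | d.fst ∈ K ∧ d.snd ∈ K} :=
      card_le_card fun d => by simp only [down, up, mem_union, mem_filter]; tauto

lemma two_mul_card_le_sum_degree_of_rank {K : Finset V} {u₀ : V} (hu₀ : u₀ ∈ K) (r : V → ℕ)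
    (hr : ∀ u ∈ K, u ≠ u₀ → ∃ v ∈ K, G.Adj u v ∧ r v < r u)
    (hK : 2 ≤ #{d : G.Dart | d.fst ∈ K ∧ d.snd ∉ K}) :
    2 * #K ≤ ∑ u ∈ K, G.degree u := by
  have h_inner : 2 * (#K - 1) ≤ #{d : G.Dart | d.fst ∈ K ∧ d.snd ∈ K} := by
    refine le_trans ?_ (two_mul_card_le_card_darts_of_rank K r)
    rw [← card_erase_of_mem hu₀]
    exact Nat.mul_le_mul_left 2 <| card_le_card fun u hu => by
      obtain ⟨hne, huK⟩ := mem_erase.mp hu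
      exact mem_filter.mpr ⟨huK, hr u huK hne⟩
  have h_split : #{d : G.Dart | d.fst ∈ K} =
      #{d : G.Dart | d.fst ∈ K ∧ d.snd ∈ K} + #{d : G.Dart | d.fst ∈ K ∧ d.snd ∉ K} := by
    rw [← filter_filter, ← filter_filter, card_filter_add_card_filter_not]
  have := card_pos.mpr ⟨u₀, hu₀⟩
  rw [sum_degree_eq_card_darts]
  omega

lemma two_mul_card_le_sum_degree (L : Finset V)
    (hL : ∀ K ⊆ L, K.Nonempty → (∀ d : G.Dart, d.fst ∈ K → d.snd ∈ L → d.snd ∈ K) →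
      2 ≤ #{d : G.Dart | d.fst ∈ K ∧ d.snd ∉ K}) :
    2 * #L ≤ ∑ u ∈ L, G.degree u := by
  classical
  set H := ((⊤ : G.Subgraph).induce (L : Set V)).spanningCoe
  -- In the component of `u₀`, distance from `u₀` is a rank as in a breadth-first tree.
  have h_comp (u₀ : V) (hu₀ : u₀ ∈ L) :
      2 * #{u ∈ L | H.Reachable u₀ u} ≤ ∑ u ∈ L with H.Reachable u₀ u, G.degree u := by
    have hmem {u : V} : u ∈ ({u ∈ L | H.Reachable u₀ u} : Finset V) ↔
        u ∈ L ∧ H.Reachable u₀ u := mem_filter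
    refine two_mul_card_le_sum_degree_of_rank (hmem.mpr ⟨hu₀, .rfl⟩) (H.dist u₀) ?_ <|
      hL _ (filter_subset _ _) ⟨u₀, hmem.mpr ⟨hu₀, .rfl⟩⟩ ?_
    · intro u hu hne
      obtain ⟨-, hreach⟩ := hmem.mp hu
      obtain ⟨v, huv, hlt⟩ := hreach.exists_adj_dist_lt hne
      have hv : u ∈ L ∧ v ∈ L ∧ G.Adj u v := by simpa [H] using huv
      exact ⟨v, hmem.mpr ⟨hv.2.1, hreach.trans huv.reachable⟩, hv.2.2, hlt⟩
    · intro d hd hdL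
      obtain ⟨hfst, hreach⟩ := hmem.mp hd
      exact hmem.mpr ⟨hdL, hreach.trans (Adj.reachable (by simp [H, hfst, hdL, d.adj]))⟩
  calc 2 * #L
      = ∑ c ∈ L.image H.connectedComponentMk, 2 * #{u ∈ L | H.connectedComponentMk u = c} := by
        rw [← mul_sum, ← card_eq_sum_card_image]
    _ ≤ ∑ c ∈ L.image H.connectedComponentMk,
          ∑ u ∈ L with H.connectedComponentMk u = c, G.degree u := by
        refine sum_le_sum fun c hc => ?_
        obtain ⟨u₀, hu₀, rfl⟩ := mem_image.mp hc
        simpa only [ConnectedComponent.eq, reachable_comm] using h_comp u₀ hu₀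
    _ = ∑ u ∈ L, G.degree u := sum_fiberwise_of_maps_to (fun u hu => mem_image_of_mem _ hu) _

end SimpleGraph

section Fermat

variable {G : SimpleGraph V}

lemma fermatDist_le (u v w σ : V) :
    fermatDist G u v w ≤ G.dist σ u + G.dist σ v + G.dist σ w :=
  ciInf_le (OrderBot.bddBelow _) σ

lemma le_fermatDist [Nonempty V] {u v w : V} {c : ℕ}
    (h : ∀ σ, c ≤ G.dist σ u + G.dist σ v + G.dist σ w) : c ≤ fermatDist G u v w :=
  le_ciInf h

lemma fermatDist_comm (u v w : V) : fermatDist G u v w = fermatDist G v u w := by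
  simp only [fermatDist, add_comm (G.dist _ u)]

lemma fermatDist_rotate (u v w : V) : fermatDist G u v w = fermatDist G v w u := by
  simp only [fermatDist, add_comm (G.dist _ u), add_assoc]

lemma fermatDist_le_fermatDist_of_forall_dist_le {K : Set V} {x y p q : V} (hx : x ∈ K)
    (hp : p ∉ K) (hq : q ∉ K) (hy : ∀ a ∈ K, ∀ b ∉ K, G.dist y b ≤ G.dist a b) :
    fermatDist G y p q ≤ fermatDist G x p q := by
  have : Nonempty V := ⟨x⟩
  refine le_fermatDist fun σ => ?_
  by_cases hσ : σ ∈ K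
  · calc fermatDist G y p q ≤ G.dist y y + G.dist y p + G.dist y q := fermatDist_le ..
      _ ≤ G.dist σ x + G.dist σ p + G.dist σ q := by grind [hy σ hσ p hp, hy σ hσ q hq]
  · calc fermatDist G y p q ≤ G.dist σ y + G.dist σ p + G.dist σ q := fermatDist_le ..
      _ ≤ G.dist σ x + G.dist σ p + G.dist σ q := by grind [SimpleGraph.dist_comm, hy x hx σ hσ]

variable [Fintype V]

lemma fermatDist_le_fermatEcc (u v w : V) : fermatDist G u v w ≤ fermatEcc G u :=
  le_sup (f := fun p : V × V => fermatDist G u p.1 p.2) (mem_univ (v, w))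

lemma exists_fermatEcc_eq_fermatDist [Nonempty V] (u : V) :
    ∃ v w, fermatEcc G u = fermatDist G u v w := by
  obtain ⟨p, -, hp⟩ := exists_mem_eq_sup univ univ_nonempty
    (fun p : V × V => fermatDist G u p.1 p.2)
  exact ⟨p.1, p.2, hp⟩

lemma exists_fermatEcc_le_of_forall_dist_le {K : Set V} {x y : V} (hx : x ∈ K)
    (hy : ∀ a ∈ K, ∀ b ∉ K, G.dist y b ≤ G.dist a b) :
    ∃ u ∈ K, fermatEcc G y ≤ fermatEcc G u := by
  have : Nonempty V := ⟨x⟩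
  obtain ⟨p, q, hpq⟩ := exists_fermatEcc_eq_fermatDist (G := G) y
  by_cases hp : p ∈ K
  · exact ⟨p, hp, hpq ▸ fermatDist_comm (G := G) y p q ▸ fermatDist_le_fermatEcc ..⟩
  by_cases hq : q ∈ K
  · exact ⟨q, hq, hpq ▸ fermatDist_rotate (G := G) q y p ▸ fermatDist_le_fermatEcc ..⟩
  exact ⟨x, hx, hpq ▸ (fermatDist_le_fermatDist_of_forall_dist_le hx hp hq hy).trans
    (fermatDist_le_fermatEcc ..)⟩

variable [DecidableEq V] [DecidableRel G.Adj]

lemma two_le_card_boundary_darts_of_fermatEcc_le (hG : G.Connected) {t : ℕ}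
    (ht : ∃ s, t < fermatEcc G s) {K : Finset V} (hK : K.Nonempty)
    (hKt : ∀ u ∈ K, fermatEcc G u ≤ t)
    (hclosed : ∀ d : G.Dart, d.fst ∈ K → fermatEcc G d.snd ≤ t → d.snd ∈ K) :
    2 ≤ #{d : G.Dart | d.fst ∈ K ∧ d.snd ∉ K} := by
  obtain ⟨s, hs⟩ := ht
  obtain ⟨u₀, hu₀⟩ := hK
  obtain ⟨p⟩ := hG.preconnected u₀ s
  obtain ⟨d₀, -, hd₀⟩ := p.exists_boundary_dart K hu₀ fun h => (hKt s h).not_gt hs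
  by_contra! hlt
  have h_exit : ∀ d : G.Dart, d.fst ∈ K → d.snd ∉ K → d.snd = d₀.snd := fun d hd hd' =>
    congrArg (·.snd) <| card_le_one.mp (Nat.le_of_lt_succ hlt) d (by simp [hd, hd'])
      d₀ (by simpa using hd₀)
  obtain ⟨u, hu, hle⟩ := exists_fermatEcc_le_of_forall_dist_le (G := G) hd₀.1
    fun a ha b hb => hG.dist_le_dist_of_forall_boundary_dart_snd_eq h_exit ha hb
  exact hd₀.2 (hclosed d₀ hd₀.1 (hle.trans (hKt u hu)))

lemma sum_degree_superlevel_fermatEcc_le (hG : G.Connected)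
    (hm : #G.edgeFinset ≤ Fintype.card V) (t : ℕ) :
    ∑ u with t < fermatEcc G u, G.degree u ≤ 2 * #{u | t < fermatEcc G u} := by
  by_cases ht : ∃ s, t < fermatEcc G s
  · have h_low : 2 * #{u | fermatEcc G u ≤ t} ≤ ∑ u with fermatEcc G u ≤ t, G.degree u :=
      G.two_mul_card_le_sum_degree _ fun K hKL hK hclosed =>
        two_le_card_boundary_darts_of_fermatEcc_le hG ht hK
          (fun u hu => (mem_filter.mp (hKL hu)).2)
          (fun d hd hdt => hclosed d hd (mem_filter.mpr ⟨mem_univ _, hdt⟩))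
    have h_deg := G.sum_degrees_eq_twice_card_edges
    have h_sum := sum_filter_add_sum_filter_not univ (t < fermatEcc G ·) (G.degree ·)
    have h_card := card_filter_add_card_filter_not (s := univ) (t < fermatEcc G ·)
    simp only [not_lt, card_univ] at h_sum h_card
    omega
  · simp only [not_exists, not_lt] at ht
    simp [Nat.not_lt.mpr (ht _)]

lemma sum_degree_mul_fermatEcc_sq_le (hG : G.Connected)
    (hm : #G.edgeFinset ≤ Fintype.card V) :
    ∑ u, G.degree u * fermatEcc G u ^ 2 ≤ ∑ u, 2 * fermatEcc G u ^ 2 :=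
  sum_mul_le_sum_mul_of_sum_superlevel_le univ (fermatEcc G) (G.degree ·) (fun _ => 2)
    (pow_left_mono 2) (zero_pow two_ne_zero) fun t => by
      simpa [mul_comm] using sum_degree_superlevel_fermatEcc_le hG hm t

end Fermat

lemma F2_le_F1 [Fintype V] {G : SimpleGraph V} (hG : G.Connected)
    (hm : numEdges G ≤ Fintype.card V) : F2 G ≤ F1 G := by
  classical
  have h_edges : 2 * F2 G ≤ ∑ u, G.degree u * fermatEcc G u ^ 2 := by
    unfold F2
    convert G.two_mul_sum_edgeFinset_lift_mul_le (fermatEcc G)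
  have h_layers := sum_degree_mul_fermatEcc_sq_le hG (by unfold numEdges at hm; convert hm)
  rw [← mul_sum] at h_layers
  unfold F1
  omega

/-- For every finite connected unicyclic graph `G` (connected with `m = n`),
`F₂(G)/m ≤ F₁(G)/n`. -/
theorem avg_F2_le_avg_F1_of_unicyclic [Fintype V] (G : SimpleGraph V) (hG : G.Connected)
    (huni : numEdges G = Fintype.card V) :
    (F2 G : ℚ) / (numEdges G : ℚ) ≤ (F1 G : ℚ) / (Fintype.card V : ℚ) := by
  rw [huni]
  gcongr
  exact_mod_cast F2_le_F1 hG huni.le
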